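/- Let G¹ = SL₂(ℝ) act on binary cubic forms by the twisted action, let w₁ = (0,0,1,0), w₂ = (0,0,0,1), and let N = {n_x : x ∈ ℝ} where n_x is the lower-triangular unipotent matrix with rows (1,0) and (x,1). Then the set S = {x ∈ ℝ⁴ : D(x) = 0} is the disjoint union S = {0} ⊔ G¹·w₁ ⊔ G¹·w₂; the stabilizer of w₁ in G¹ is trivial, and the stabilizer of w₂ in G¹ equals N. -/

import Mathlib

/-- The action of a 2×2 matrix `g` on the coefficient vector `x = (a,b,c,d)` of the binary
cubic form `a u³ + b u²v + c uv² + d v³`, given by `(g·f)(u,v) = f((u,v)·g)`. -/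
def cubicAct (g : Matrix (Fin 2) (Fin 2) ℝ) (x : Fin 4 → ℝ) : Fin 4 → ℝ :=
  ![x 0 * g 0 0 ^ 3 + x 1 * g 0 0 ^ 2 * g 0 1 + x 2 * g 0 0 * g 0 1 ^ 2 + x 3 * g 0 1 ^ 3,
    3 * x 0 * g 0 0 ^ 2 * g 1 0 + x 1 * (g 0 0 ^ 2 * g 1 1 + 2 * g 0 0 * g 0 1 * g 1 0)
      + x 2 * (2 * g 0 0 * g 0 1 * g 1 1 + g 1 0 * g 0 1 ^ 2) + 3 * x 3 * g 0 1 ^ 2 * g 1 1,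
    3 * x 0 * g 0 0 * g 1 0 ^ 2 + x 1 * (2 * g 0 0 * g 1 0 * g 1 1 + g 1 0 ^ 2 * g 0 1)
      + x 2 * (g 0 0 * g 1 1 ^ 2 + 2 * g 1 0 * g 0 1 * g 1 1) + 3 * x 3 * g 0 1 * g 1 1 ^ 2,
    x 0 * g 1 0 ^ 3 + x 1 * g 1 0 ^ 2 * g 1 1 + x 2 * g 1 0 * g 1 1 ^ 2 + x 3 * g 1 1 ^ 3]

/-- The discriminant of the binary cubic form with coefficients `(a,b,c,d)`. -/
def cubicDisc (x : Fin 4 → ℝ) : ℝ :=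
  x 1 ^ 2 * x 2 ^ 2 + 18 * x 0 * x 1 * x 2 * x 3 - 4 * x 0 * x 2 ^ 3 - 4 * x 1 ^ 3 * x 3
    - 27 * x 0 ^ 2 * x 3 ^ 2

def w1 : Fin 4 → ℝ := ![0, 0, 1, 0]

def w2 : Fin 4 → ℝ := ![0, 0, 0, 1]

/-!
A nonzero binary cubic with vanishing discriminant has a repeated linear factor, and the repeated
root is rational in the coefficients: it is `t = (9ad - bc) / (2(b² - 3ac))` when the leading
coefficient `b² - 3ac` of the Hessian is nonzero, and the triple root `t = -b / (3a)` otherwise.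
So the form is `(r u + s v)(p u + q v)²`.
The twisted action sends `u v²` to `(g₀₀ u + g₁₀ v)(g₀₁ u + g₁₁ v)²` and `v³` to
`(g₀₁ u + g₁₁ v)³`; hence such a product lies in the orbit of `w₁` when its two factors are
independent (rescale them to get determinant `1`) and in the orbit of `w₂` when they are
proportional (take a real cube root). As the action is a left action, invertible matrices act
injectively, so the orbits avoid `0` and are disjoint once `w₁` is not a translate of `w₂`.
-/

open Matrix

/-- Coefficient vector of the cubic form `(r u + s v) (p u + q v)²`. -/
def linMulSq (r s p q : ℝ) : Fin 4 → ℝ :=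
  ![r * p ^ 2, s * p ^ 2 + 2 * r * p * q, r * q ^ 2 + 2 * s * p * q, s * q ^ 2]

lemma linMulSq_smul (r s p q μ l : ℝ) :
    linMulSq (μ * r) (μ * s) (l * p) (l * q) = (μ * l ^ 2) • linMulSq r s p q := by
  ext i; fin_cases i <;> simp [linMulSq] <;> ring

lemma cubicDisc_linMulSq (r s p q : ℝ) : cubicDisc (linMulSq r s p q) = 0 := by
  simp [cubicDisc, linMulSq]; ring

lemma cubicAct_w1 (g : Matrix (Fin 2) (Fin 2) ℝ) :
    cubicAct g w1 = linMulSq (g 0 0) (g 1 0) (g 0 1) (g 1 1) := by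
  ext i; fin_cases i <;> simp [cubicAct, w1, linMulSq]; ring

lemma cubicAct_w2 (g : Matrix (Fin 2) (Fin 2) ℝ) :
    cubicAct g w2 = linMulSq (g 0 1) (g 1 1) (g 0 1) (g 1 1) := by
  ext i; fin_cases i <;> simp [cubicAct, w2, linMulSq] <;> ring

lemma cubicAct_mul (g h : Matrix (Fin 2) (Fin 2) ℝ) (x : Fin 4 → ℝ) :
    cubicAct (g * h) x = cubicAct g (cubicAct h x) := by
  ext i; fin_cases i <;> simp [cubicAct, Matrix.mul_apply, Fin.sum_univ_two] <;> ring

lemma cubicAct_one (x : Fin 4 → ℝ) : cubicAct 1 x = x := by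
  ext i; fin_cases i <;> simp [cubicAct]

lemma cubicAct_zero (g : Matrix (Fin 2) (Fin 2) ℝ) : cubicAct g 0 = 0 := by
  ext i; fin_cases i <;> simp [cubicAct]

lemma cubicAct_inv_cubicAct {g : Matrix (Fin 2) (Fin 2) ℝ} (hg : IsUnit g.det) (x : Fin 4 → ℝ) :
    cubicAct g⁻¹ (cubicAct g x) = x := by
  rw [← cubicAct_mul, nonsing_inv_mul g hg, cubicAct_one]

lemma cubicAct_ne_zero {g : Matrix (Fin 2) (Fin 2) ℝ} (hg : IsUnit g.det) {x : Fin 4 → ℝ}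
    (hx : x ≠ 0) : cubicAct g x ≠ 0 := fun h => hx <| by
  rw [← cubicAct_inv_cubicAct hg x, h, cubicAct_zero]

lemma w1_ne_zero : w1 ≠ 0 := fun h => by simpa [w1] using congrFun h 2

lemma w2_ne_zero : w2 ≠ 0 := fun h => by simpa [w2] using congrFun h 3

lemma linMulSq_ne_w2 {r s p q : ℝ} (hdet : r * q - p * s ≠ 0) : linMulSq r s p q ≠ w2 := by
  intro h
  have e0 := congrFun h 0
  have e1 := congrFun h 1
  have e2 := congrFun h 2
  have e3 := congrFun h 3
  simp only [linMulSq, w2, cons_val] at e0 e1 e2 e3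
  have hs : s ≠ 0 := by rintro rfl; simp at e3
  have hq : q ≠ 0 := by rintro rfl; simp at e3
  have hp : p = 0 := by
    by_contra hp
    have hr : r = 0 := by simpa [hp] using e0
    simp [hr, hs, hp] at e1
  have hr : r = 0 := by simpa [hp, hq] using e2
  simp [hr, hp] at hdet

lemma cubicAct_w1_ne_w2 {k : Matrix (Fin 2) (Fin 2) ℝ} (hk : k.det ≠ 0) : cubicAct k w1 ≠ w2 := by
  obtain ⟨r, p, s, q, rfl⟩ : ∃ r p s q, k = !![r, p; s, q] := ⟨_, _, _, _, (etaExpand_eq k).symm⟩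
  rw [det_fin_two_of] at hk
  rw [cubicAct_w1]
  exact linMulSq_ne_w2 hk

lemma cubicAct_w1_ne_cubicAct_w2 {g h : Matrix (Fin 2) (Fin 2) ℝ} (hg : IsUnit g.det)
    (hh : IsUnit h.det) : cubicAct g w1 ≠ cubicAct h w2 := by
  intro heq
  refine cubicAct_w1_ne_w2 (k := h⁻¹ * g) ?_ ?_
  · simpa [det_nonsing_inv] using ⟨hh.ne_zero, hg.ne_zero⟩
  · rw [cubicAct_mul, heq, cubicAct_inv_cubicAct hh]

lemma eq_one_of_linMulSq_eq_w1 {r s p q : ℝ} (hdet : r * q - p * s = 1)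
    (h : linMulSq r s p q = w1) : !![r, p; s, q] = 1 := by
  have e0 := congrFun h 0
  have e1 := congrFun h 1
  have e2 := congrFun h 2
  have e3 := congrFun h 3
  simp only [linMulSq, w1, cons_val] at e0 e1 e2 e3
  have hp : p = 0 := by
    by_contra hp
    have hr : r = 0 := by simpa [hp] using e0
    have hs : s = 0 := by simpa [hr, hp] using e1
    simp [hr, hs] at hdet
  have hq : q = 1 := by linear_combination e2 - q * hdet - 3 * s * q * hp
  have hr : r = 1 := by linear_combination hdet - r * hq + s * hp
  have hs : s = 0 := by simpa [hq] using e3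
  rw [hr, hs, hp, hq, one_fin_two]

lemma cubicAct_w1_eq_w1 {g : Matrix (Fin 2) (Fin 2) ℝ} (hg : g.det = 1) (h : cubicAct g w1 = w1) :
    g = 1 := by
  obtain ⟨r, p, s, q, rfl⟩ : ∃ r p s q, g = !![r, p; s, q] := ⟨_, _, _, _, (etaExpand_eq g).symm⟩
  rw [det_fin_two_of] at hg
  rw [cubicAct_w1] at h
  exact eq_one_of_linMulSq_eq_w1 hg h

lemma linMulSq_self_eq_w2_iff {p q : ℝ} : linMulSq p q p q = w2 ↔ p = 0 ∧ q = 1 := by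
  constructor
  · intro h
    have e0 := congrFun h 0
    have e3 := congrFun h 3
    simp only [linMulSq, w2, cons_val] at e0 e3
    refine ⟨pow_eq_zero_iff three_ne_zero |>.mp (by linear_combination e0), ?_⟩
    exact (Odd.strictMono_pow (by decide)).injective (by linear_combination e3 : q ^ 3 = 1 ^ 3)
  · rintro ⟨rfl, rfl⟩
    ext i; fin_cases i <;> simp [linMulSq, w2]

lemma cubicAct_w2_eq_w2_iff {g : Matrix (Fin 2) (Fin 2) ℝ} (hg : g.det = 1) :
    cubicAct g w2 = w2 ↔ ∃ x : ℝ, g = !![1, 0; x, 1] := by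
  obtain ⟨r, p, s, q, rfl⟩ : ∃ r p s q, g = !![r, p; s, q] := ⟨_, _, _, _, (etaExpand_eq g).symm⟩
  rw [det_fin_two_of] at hg
  rw [cubicAct_w2]
  simp only [of_apply, cons_val', cons_val_zero, cons_val_one, empty_val', cons_val_fin_one,
    linMulSq_self_eq_w2_iff]
  constructor
  · rintro ⟨rfl, rfl⟩
    exact ⟨s, by rw [show r = 1 by linear_combination hg]⟩
  · rintro ⟨x, hx⟩
    exact ⟨by simpa using congrFun₂ hx 0 1, by simpa using congrFun₂ hx 1 1⟩

lemma linMulSq_of_double_root {a b c d t : ℝ} (h0 : a * t ^ 3 + b * t ^ 2 + c * t + d = 0)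
    (h1 : 3 * a * t ^ 2 + 2 * b * t + c = 0) :
    ![a, b, c, d] = linMulSq a (b + 2 * a * t) 1 (-t) := by
  ext i; fin_cases i <;> simp [linMulSq]
  · linear_combination h1
  · linear_combination h0 - t * h1

lemma exists_double_root_of_hessian_ne_zero {a b c d : ℝ} (hD : cubicDisc ![a, b, c, d] = 0)
    (hΔ : b ^ 2 - 3 * a * c ≠ 0) :
    ∃ t, a * t ^ 3 + b * t ^ 2 + c * t + d = 0 ∧ 3 * a * t ^ 2 + 2 * b * t + c = 0 := by
  simp only [cubicDisc, cons_val] at hD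
  obtain ⟨t, ht⟩ : ∃ t, 2 * (b ^ 2 - 3 * a * c) * t = 9 * a * d - b * c :=
    ⟨(9 * a * d - b * c) / (2 * (b ^ 2 - 3 * a * c)), by field_simp⟩
  have h2Δ : 2 * (b ^ 2 - 3 * a * c) ≠ 0 := mul_ne_zero two_ne_zero hΔ
  -- With `F = a t³ + b t² + c t + d`, `Δ = b² - 3ac` and `D` the discriminant, the certificates
  -- below are `(2Δ)³ F(t) = -(2b³ - 9abc + 27a²d) D` and `(2Δ)² F'(t) = -9a D`.
  refine ⟨t, ?_, ?_⟩
  · refine (mul_eq_zero.mp ?_).resolve_left (pow_ne_zero 3 h2Δ)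
    linear_combination (a * ((2 * (b ^ 2 - 3 * a * c) * t) ^ 2
      + 2 * (b ^ 2 - 3 * a * c) * t * (9 * a * d - b * c) + (9 * a * d - b * c) ^ 2)
      + 2 * b * (b ^ 2 - 3 * a * c) * (2 * (b ^ 2 - 3 * a * c) * t + (9 * a * d - b * c))
      + 4 * c * (b ^ 2 - 3 * a * c) ^ 2) * ht - (2 * b ^ 3 - 9 * a * b * c + 27 * a ^ 2 * d) * hD
  · refine (mul_eq_zero.mp ?_).resolve_left (pow_ne_zero 2 h2Δ)
    linear_combination (3 * a * (2 * (b ^ 2 - 3 * a * c) * t + (9 * a * d - b * c))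
      + 4 * b * (b ^ 2 - 3 * a * c)) * ht - 9 * a * hD

lemma exists_triple_root_of_hessian_eq_zero {a b c d : ℝ} (hD : cubicDisc ![a, b, c, d] = 0)
    (hΔ : b ^ 2 - 3 * a * c = 0) (ha : a ≠ 0) :
    ∃ t, a * t ^ 3 + b * t ^ 2 + c * t + d = 0 ∧ 3 * a * t ^ 2 + 2 * b * t + c = 0 := by
  simp only [cubicDisc, cons_val] at hD
  obtain ⟨t, ht⟩ : ∃ t, 3 * a * t = -b := ⟨-b / (3 * a), by field_simp⟩
  -- `(2b³ - 9abc + 27a²d)² = 4 (b² - 3ac)³ - 27 a² D`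
  have hK : 2 * b ^ 3 - 9 * a * b * c + 27 * a ^ 2 * d = 0 :=
    pow_eq_zero_iff two_ne_zero |>.mp
      (by linear_combination 4 * (b ^ 2 - 3 * a * c) ^ 2 * hΔ - 27 * a ^ 2 * hD)
  refine ⟨t, ?_, ?_⟩
  · refine (mul_eq_zero.mp ?_).resolve_left (by positivity : (27 * a ^ 2) ≠ 0)
    linear_combination ((3 * a * t) ^ 2 + 2 * b * (3 * a * t) - 2 * b ^ 2 + 9 * a * c) * ht + hK
  · refine (mul_eq_zero.mp ?_).resolve_left (by positivity : (3 * a) ≠ 0)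
    linear_combination (3 * a * t + b) * ht - hΔ

lemma exists_linMulSq_of_cubicDisc_eq_zero {x : Fin 4 → ℝ} (hD : cubicDisc x = 0) :
    ∃ r s p q, x = linMulSq r s p q := by
  obtain ⟨a, b, c, d, rfl⟩ : ∃ a b c d : ℝ, x = ![a, b, c, d] :=
    ⟨x 0, x 1, x 2, x 3, by ext i; fin_cases i <;> rfl⟩
  by_cases hΔ : b ^ 2 - 3 * a * c = 0
  · by_cases ha : a = 0
    · have hb : b = 0 := by simpa [ha] using hΔ
      exact ⟨c, d, 0, 1, by ext i; fin_cases i <;> simp [linMulSq, ha, hb]⟩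
    · obtain ⟨t, h0, h1⟩ := exists_triple_root_of_hessian_eq_zero hD hΔ ha
      exact ⟨_, _, _, _, linMulSq_of_double_root h0 h1⟩
  · obtain ⟨t, h0, h1⟩ := exists_double_root_of_hessian_ne_zero hD hΔ
    exact ⟨_, _, _, _, linMulSq_of_double_root h0 h1⟩

def sl2Orbit (w : Fin 4 → ℝ) : Set (Fin 4 → ℝ) :=
  {x | ∃ g : Matrix (Fin 2) (Fin 2) ℝ, g.det = 1 ∧ x = cubicAct g w}

lemma exists_cube_root (a : ℝ) : ∃ x : ℝ, x ^ 3 = a := by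
  rcases le_total 0 a with h | h
  · exact ⟨a ^ ((3 : ℕ) : ℝ)⁻¹, Real.rpow_inv_natCast_pow h three_ne_zero⟩
  · refine ⟨-(-a) ^ ((3 : ℕ) : ℝ)⁻¹, ?_⟩
    rw [neg_pow, Real.rpow_inv_natCast_pow (neg_nonneg.mpr h) three_ne_zero]
    ring

lemma linMulSq_mem_sl2Orbit_w1 {r s p q : ℝ} (hδ : r * q - p * s ≠ 0) :
    linMulSq r s p q ∈ sl2Orbit w1 := by
  refine ⟨!![((r * q - p * s) ^ 2)⁻¹ * r, (r * q - p * s) * p;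
    ((r * q - p * s) ^ 2)⁻¹ * s, (r * q - p * s) * q], ?_, ?_⟩
  · rw [det_fin_two_of]; field_simp
  · rw [cubicAct_w1]
    simp only [of_apply, cons_val', cons_val_zero, cons_val_one, empty_val', cons_val_fin_one]
    rw [linMulSq_smul, inv_mul_cancel₀ (pow_ne_zero 2 hδ), one_smul]

lemma linMulSq_self_mem_sl2Orbit_w2 {p q : ℝ} (hpq : p ≠ 0 ∨ q ≠ 0) :
    linMulSq p q p q ∈ sl2Orbit w2 := by
  have hn : p ^ 2 + q ^ 2 ≠ 0 := by rcases hpq with h | h <;> positivity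
  refine ⟨!![q / (p ^ 2 + q ^ 2), p; -p / (p ^ 2 + q ^ 2), q], ?_, ?_⟩
  · rw [det_fin_two_of]; field_simp; ring
  · rw [cubicAct_w2]; simp

lemma linMulSq_mem_sl2Orbit {r s p q : ℝ} (h : linMulSq r s p q ≠ 0) :
    linMulSq r s p q ∈ sl2Orbit w1 ∨ linMulSq r s p q ∈ sl2Orbit w2 := by
  by_cases hδ : r * q - p * s = 0
  · right
    have hpq : p ≠ 0 ∨ q ≠ 0 := by
      by_contra! h0
      exact h (by ext i; fin_cases i <;> simp [linMulSq, h0.1, h0.2])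
    obtain ⟨t, rfl, rfl⟩ : ∃ t, r = t * p ∧ s = t * q := by
      rcases hpq with hp | hq
      · exact ⟨r / p, by field_simp, by field_simp; linear_combination -hδ⟩
      · exact ⟨s / q, by field_simp; linear_combination hδ, by field_simp⟩
    obtain ⟨τ, rfl⟩ := exists_cube_root t
    have hτ : τ ≠ 0 := by rintro rfl; exact h (by ext i; fin_cases i <;> simp [linMulSq])
    have hcube :
        linMulSq (τ ^ 3 * p) (τ ^ 3 * q) p q = linMulSq (τ * p) (τ * q) (τ * p) (τ * q) := by
      rw [linMulSq_smul, ← pow_succ']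
      simpa using linMulSq_smul p q p q (τ ^ 3) 1
    rw [hcube]
    exact linMulSq_self_mem_sl2Orbit_w2 (by simpa [hτ] using hpq)
  · exact Or.inl (linMulSq_mem_sl2Orbit_w1 hδ)

/-- The singular set `S = {D = 0}` is the disjoint union `{0} ⊔ G¹·w₁ ⊔ G¹·w₂` for the
action of `G¹ = SL₂(ℝ)`; the stabilizer of `w₁` in `G¹` is trivial and the stabilizer of
`w₂` in `G¹` is the group `N` of lower-triangular unipotent matrices. -/
theorem singular_set_description :
    (∀ x : Fin 4 → ℝ, cubicDisc x = 0 ↔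
      (x = 0 ∨ (∃ g : Matrix (Fin 2) (Fin 2) ℝ, g.det = 1 ∧ x = cubicAct g w1) ∨
        (∃ g : Matrix (Fin 2) (Fin 2) ℝ, g.det = 1 ∧ x = cubicAct g w2))) ∧
    (∀ g : Matrix (Fin 2) (Fin 2) ℝ, g.det = 1 → cubicAct g w1 ≠ 0) ∧
    (∀ g : Matrix (Fin 2) (Fin 2) ℝ, g.det = 1 → cubicAct g w2 ≠ 0) ∧
    (∀ g h : Matrix (Fin 2) (Fin 2) ℝ, g.det = 1 → h.det = 1 →
      cubicAct g w1 ≠ cubicAct h w2) ∧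
    (∀ g : Matrix (Fin 2) (Fin 2) ℝ, g.det = 1 → cubicAct g w1 = w1 → g = 1) ∧
    (∀ g : Matrix (Fin 2) (Fin 2) ℝ, g.det = 1 →
      (cubicAct g w2 = w2 ↔ ∃ x : ℝ, g = !![1, 0; x, 1])) := by
  refine ⟨fun x => ⟨fun hD => ?_, ?_⟩,
    fun g hg => cubicAct_ne_zero (by simp [hg]) w1_ne_zero,
    fun g hg => cubicAct_ne_zero (by simp [hg]) w2_ne_zero,
    fun g h hg hh => cubicAct_w1_ne_cubicAct_w2 (by simp [hg]) (by simp [hh]),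
    fun g hg => cubicAct_w1_eq_w1 hg, fun g hg => cubicAct_w2_eq_w2_iff hg⟩
  · by_cases hx : x = 0
    · exact Or.inl hx
    obtain ⟨r, s, p, q, rfl⟩ := exists_linMulSq_of_cubicDisc_eq_zero hD
    exact Or.inr (linMulSq_mem_sl2Orbit hx)
  · rintro (rfl | ⟨g, -, rfl⟩ | ⟨g, -, rfl⟩)
    · simp [cubicDisc]
    · rw [cubicAct_w1]; exact cubicDisc_linMulSq ..
    · rw [cubicAct_w2]; exact cubicDisc_linMulSq ..
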